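/- Let (F,W) be a mixed Hodge structure on V with Deligne bigrading {I^{p,q}_{(F,W)}} and let λ_{(F,W)} := ⊕_{r<0,s<0} gl(V)^{r,s}, where gl(V)^{r,s} := {α ∈ End(V) : α(I^{p,q}) ⊆ I^{p+r,q+s} for all p,q}. Then for every g ∈ exp(λ_{(F,W)}) the pair (g·F, W), where (g·F)^p := g(F^p), is again a mixed Hodge structure, and its Deligne bigrading satisfies I^{p,q}_{(g·F, W)} = g(I^{p,q}_{(F,W)}) for all p,q. -/

import Mathlib

open Submodule

noncomputable section

instance : RingHomSurjective (starRingEnd ℂ) :=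
  ⟨fun x => ⟨starRingEnd ℂ x, Complex.conj_conj x⟩⟩

variable {V : Type*} [AddCommGroup V] [Module ℂ V]

/-- A finite decreasing filtration of `V` by complex subspaces. -/
def IsDecFilt (F : ℤ → Submodule ℂ V) : Prop :=
  (∀ p : ℤ, F (p + 1) ≤ F p) ∧ (∃ a : ℤ, F a = ⊤) ∧ ∃ b : ℤ, F b = ⊥

/-- A finite increasing filtration of `V` by complex subspaces. -/
def IsIncFilt (W : ℤ → Submodule ℂ V) : Prop :=
  (∀ k : ℤ, W k ≤ W (k + 1)) ∧ (∃ a : ℤ, W a = ⊥) ∧ ∃ b : ℤ, W b = ⊤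

/-- The subspace `F^p ∩ W_k + W_{k-1}` of `V`, representing the `p`-th piece
`F^p Gr^W_k` of the induced filtration on `Gr^W_k = W_k/W_{k-1}`. -/
def grF (F W : ℤ → Submodule ℂ V) (k p : ℤ) : Submodule ℂ V :=
  F p ⊓ W k ⊔ W (k - 1)

/-- The subspace of `V` representing the Hodge piece
`H^{p,k-p} = F^p Gr^W_k ∩ conj (F^{k-p} Gr^W_k)` of `Gr^W_k`. -/
def grH (σ : V →ₛₗ[starRingEnd ℂ] V) (F W : ℤ → Submodule ℂ V) (k p : ℤ) : Submodule ℂ V :=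
  grF F W k p ⊓ grF (fun q => (F q).map σ) W k (k - p)

/-- The filtration induced by `F` on `Gr^W_k` is a pure Hodge structure of weight `k`:
the pieces `H^{p,k-p}` span `Gr^W_k` and are independent there (all subspaces of the
quotient are represented by their preimages in `V`, which contain `W_{k-1}`). -/
def IsPureOnGr (σ : V →ₛₗ[starRingEnd ℂ] V) (F W : ℤ → Submodule ℂ V) (k : ℤ) : Prop :=
  (⨆ p : ℤ, grH σ F W k p) = W k ∧
  ∀ p : ℤ, grH σ F W k p ⊓ (⨆ (q : ℤ) (_ : q ≠ p), grH σ F W k q) = W (k - 1)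

/-- `(F, W)` is a mixed Hodge structure on `V` (relative to the conjugation `σ`). -/
def IsMHS (σ : V →ₛₗ[starRingEnd ℂ] V) (F W : ℤ → Submodule ℂ V) : Prop :=
  IsDecFilt F ∧ IsIncFilt W ∧ (∀ k : ℤ, (W k).map σ = W k) ∧ ∀ k : ℤ, IsPureOnGr σ F W k

/-- `I` is a bigrading of the mixed Hodge structure `(F, W)`. -/
def IsBigrading (F W : ℤ → Submodule ℂ V) (I : ℤ → ℤ → Submodule ℂ V) : Prop :=
  DirectSum.IsInternal (fun pq : ℤ × ℤ => I pq.1 pq.2) ∧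
  (∀ p : ℤ, F p = ⨆ (rs : ℤ × ℤ) (_ : p ≤ rs.1), I rs.1 rs.2) ∧
  ∀ k : ℤ, W k = ⨆ (rs : ℤ × ℤ) (_ : rs.1 + rs.2 ≤ k), I rs.1 rs.2

/-- `⊕_{r < p, s < q} I^{r,s}`. -/
def lowPart (I : ℤ → ℤ → Submodule ℂ V) (p q : ℤ) : Submodule ℂ V :=
  ⨆ (rs : ℤ × ℤ) (_ : rs.1 < p ∧ rs.2 < q), I rs.1 rs.2

/-- `I` is a bigrading of `(F, W)` satisfying the Deligne conjugation-symmetry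
condition `I^{p,q} ≡ conj (I^{q,p}) mod ⊕_{r<p,s<q} I^{r,s}` (equality of images in the
quotient by `⊕_{r<p,s<q} I^{r,s}`). -/
def IsDeligne (σ : V →ₛₗ[starRingEnd ℂ] V) (F W : ℤ → Submodule ℂ V)
    (I : ℤ → ℤ → Submodule ℂ V) : Prop :=
  IsBigrading F W I ∧
  ∀ p q : ℤ, I p q ⊔ lowPart I p q = (I q p).map σ ⊔ lowPart I p q

/-- The subspace of `End(V)` of endomorphisms mapping `P` into `Q`. -/
def mapsInto (P Q : Submodule ℂ V) : Submodule ℂ (Module.End ℂ V) where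
  carrier := {α | ∀ v ∈ P, α v ∈ Q}
  add_mem' := by
    intro a b ha hb v hv
    have h : (a + b) v = a v + b v := rfl
    rw [h]
    exact Q.add_mem (ha v hv) (hb v hv)
  zero_mem' := by
    intro v hv
    show (0 : Module.End ℂ V) v ∈ Q
    simp
  smul_mem' := by
    intro c a ha v hv
    have h : (c • a) v = c • a v := rfl
    rw [h]
    exact Q.smul_mem c (ha v hv)

/-- Conjugation on `End(V)` induced by the conjugation `σ` of `V`:
`α ↦ σ ∘ α ∘ σ`. -/
def conjEnd (σ : V →ₛₗ[starRingEnd ℂ] V) (α : Module.End ℂ V) : Module.End ℂ V where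
  toFun v := σ (α (σ v))
  map_add' x y := by simp
  map_smul' c v := by simp [map_smulₛₗ]

/-- Conjugation on `End(V)` as an antilinear map. -/
def conjEndSL (σ : V →ₛₗ[starRingEnd ℂ] V) :
    Module.End ℂ V →ₛₗ[starRingEnd ℂ] Module.End ℂ V where
  toFun := conjEnd σ
  map_add' α β := by
    ext v
    simp [conjEnd]
  map_smul' c α := by
    ext v
    simp [conjEnd]

/-- `gl(V)^{r,s}` relative to a bigrading `I` of `V`: endomorphisms with
`α(I^{p,q}) ⊆ I^{p+r,q+s}` for all `p, q`. -/
def endShiftI (I : ℤ → ℤ → Submodule ℂ V) (r s : ℤ) : Submodule ℂ (Module.End ℂ V) :=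
  ⨅ pq : ℤ × ℤ, mapsInto (I pq.1 pq.2) (I (pq.1 + r) (pq.2 + s))

/-- The exponential of a (nilpotent) endomorphism of a finite-dimensional space,
as the truncated exponential series. -/
def expEnd [FiniteDimensional ℂ V] (α : Module.End ℂ V) : Module.End ℂ V :=
  ∑ i ∈ Finset.range (Module.finrank ℂ V + 1), ((i.factorial : ℂ)⁻¹) • α ^ i

/-- `λ_{(F,W)} = ⊕_{r<0, s<0} gl(V)^{r,s}`. -/
def lamFW (I : ℤ → ℤ → Submodule ℂ V) : Submodule ℂ (Module.End ℂ V) :=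
  ⨆ (rs : ℤ × ℤ) (_ : rs.1 < 0 ∧ rs.2 < 0), endShiftI I rs.1 rs.2


section Aux14

variable {I : ℤ → ℤ → Submodule ℂ V}

lemma le_lowPart {a b p q : ℤ} (ha : a < p) (hb : b < q) : I a b ≤ lowPart I p q :=
  le_iSup_of_le (a, b) (le_iSup_of_le ⟨ha, hb⟩ le_rfl)

lemma lowPart_mono {r s p q : ℤ} (hr : r ≤ p) (hs : s ≤ q) :
    lowPart I r s ≤ lowPart I p q :=
  iSup_le fun rs => iSup_le fun h => le_lowPart (h.1.trans_le hr) (h.2.trans_le hs)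

/-- The submodule of endomorphisms mapping each `I^{p,q}` into `⊕_{r<p,s<q} I^{r,s}`. -/
def sLow (I : ℤ → ℤ → Submodule ℂ V) : Submodule ℂ (Module.End ℂ V) :=
  ⨅ pq : ℤ × ℤ, mapsInto (I pq.1 pq.2) (lowPart I pq.1 pq.2)

lemma mem_mapsInto {P Q : Submodule ℂ V} {g : Module.End ℂ V} :
    g ∈ mapsInto P Q ↔ ∀ v ∈ P, g v ∈ Q := Iff.rfl

lemma mem_sLow_iff {g : Module.End ℂ V} :
    g ∈ sLow I ↔ ∀ p q : ℤ, ∀ v ∈ I p q, g v ∈ lowPart I p q := by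
  rw [sLow]
  simp only [Submodule.mem_iInf, mem_mapsInto, Prod.forall]

lemma sLow_apply {g : Module.End ℂ V} (h : g ∈ sLow I) {p q : ℤ} {v : V} (hv : v ∈ I p q) :
    g v ∈ lowPart I p q := mem_sLow_iff.1 h p q v hv

lemma sLow_lowPart_map {g : Module.End ℂ V} (h : g ∈ sLow I) (p q : ℤ) :
    (lowPart I p q).map g ≤ lowPart I p q := by
  rw [lowPart, Submodule.map_iSup]
  refine iSup_le fun rs => ?_
  rw [Submodule.map_iSup]
  refine iSup_le fun hrs => ?_
  rintro w ⟨v, hv, rfl⟩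
  exact lowPart_mono hrs.1.le hrs.2.le (sLow_apply h hv)

lemma sLow_mul {g h : Module.End ℂ V} (hg : g ∈ sLow I) (hh : h ∈ sLow I) :
    g * h ∈ sLow I :=
  mem_sLow_iff.2 fun p q v hv =>
    sLow_lowPart_map hg p q (Submodule.mem_map_of_mem (sLow_apply hh hv))

lemma sLow_pow {g : Module.End ℂ V} (hg : g ∈ sLow I) : ∀ i : ℕ, g ^ (i + 1) ∈ sLow I
  | 0 => by rwa [pow_one]
  | (i + 1) => by rw [pow_succ]; exact sLow_mul (sLow_pow hg i) hg

lemma lamFW_le_sLow : lamFW I ≤ sLow I := by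
  refine iSup_le fun rs => iSup_le fun hrs => le_iInf fun pq => ?_
  refine (iInf_le _ pq).trans ?_
  intro g hg v hv
  exact le_lowPart (by omega) (by omega) (hg v hv)

lemma I_le_W {W : ℤ → Submodule ℂ V}
    (hW : ∀ k : ℤ, W k = ⨆ (rs : ℤ × ℤ) (_ : rs.1 + rs.2 ≤ k), I rs.1 rs.2)
    {a b k : ℤ} (h : a + b ≤ k) : I a b ≤ W k := by
  rw [hW k]
  exact le_iSup_of_le (a, b) (le_iSup_of_le h le_rfl)

lemma sLow_W_apply {W : ℤ → Submodule ℂ V}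
    (hW : ∀ k : ℤ, W k = ⨆ (rs : ℤ × ℤ) (_ : rs.1 + rs.2 ≤ k), I rs.1 rs.2)
    {g : Module.End ℂ V} (hg : g ∈ sLow I) (k : ℤ) {v : V} (hv : v ∈ W k) :
    g v ∈ W (k - 1) := by
  have hmap : (W k).map g ≤ W (k - 1) := by
    rw [hW k, Submodule.map_iSup]
    refine iSup_le fun rs => ?_
    rw [Submodule.map_iSup]
    refine iSup_le fun hrs => ?_
    rintro w ⟨u, hu, rfl⟩
    have h2 : lowPart I rs.1 rs.2 ≤ W (k - 1) :=
      iSup_le fun cd => iSup_le fun hcd => I_le_W hW (by omega)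
    exact h2 (sLow_apply hg hu)
  exact hmap (Submodule.mem_map_of_mem hv)

lemma grF_map_eq {W : ℤ → Submodule ℂ V} (F' : ℤ → Submodule ℂ V) (g g' : Module.End ℂ V)
    (hgW : ∀ k : ℤ, ∀ v ∈ W k, g v ∈ W k) (hg'W : ∀ k : ℤ, ∀ v ∈ W k, g' v ∈ W k)
    (hNW : ∀ k : ℤ, ∀ v ∈ W k, g v - v ∈ W (k - 1)) (hinv : ∀ v, g' (g v) = v)
    (k p : ℤ) : grF (fun p => (F' p).map g) W k p = grF F' W k p := by
  unfold grF
  apply le_antisymm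
  · refine sup_le ?_ le_sup_right
    rintro w ⟨⟨v, hv, rfl⟩, hw2⟩
    have hvW : v ∈ W k := by have := hg'W k _ hw2; rwa [hinv] at this
    exact Submodule.mem_sup.2 ⟨v, ⟨hv, hvW⟩, g v - v, hNW k v hvW, by abel⟩
  · refine sup_le ?_ le_sup_right
    rintro v ⟨hv1, hv2⟩
    exact Submodule.mem_sup.2 ⟨g v, ⟨Submodule.mem_map_of_mem hv1, hgW k v hv2⟩,
      -(g v - v), neg_mem (hNW k v hv2), by abel⟩

lemma conjEnd_apply (σ : V →ₛₗ[starRingEnd ℂ] V) (g : Module.End ℂ V) (v : V) :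
    conjEnd σ g v = σ (g (σ v)) := rfl

lemma map_conjEnd (σ : V →ₛₗ[starRingEnd ℂ] V) (hσ : ∀ v, σ (σ v) = v) (g : Module.End ℂ V)
    (P : Submodule ℂ V) : (P.map σ).map (conjEnd σ g) = (P.map g).map σ := by
  ext w
  simp only [Submodule.mem_map]
  constructor
  · rintro ⟨u, ⟨v, hv, rfl⟩, rfl⟩
    exact ⟨g v, ⟨v, hv, rfl⟩, by simp [conjEnd_apply, hσ]⟩
  · rintro ⟨u, ⟨v, hv, rfl⟩, rfl⟩
    exact ⟨σ v, ⟨v, hv, rfl⟩, by simp [conjEnd_apply, hσ]⟩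

end Aux14

/-- For every `g = exp(α)` with `α ∈ λ_{(F,W)}`, the pair
`(g·F, W)` is again a mixed Hodge structure and its Deligne bigrading is
`I^{p,q}_{(g·F,W)} = g(I^{p,q}_{(F,W)})`. -/
theorem stmt_14 [FiniteDimensional ℂ V] [Module ℚ V] [IsScalarTower ℚ ℂ V]
    (σ : V →ₛₗ[starRingEnd ℂ] V) (hσ : ∀ v, σ (σ v) = v)
    (VQ : Submodule ℚ V)
    (hQform : ∃ s : Set V, span ℚ s = VQ ∧ LinearIndependent ℂ ((↑) : s → V) ∧
      span ℂ s = ⊤)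
    (hfix : ∀ v ∈ VQ, σ v = v)
    (F W : ℤ → Submodule ℂ V)
    (hWQ : ∀ k : ℤ, W k = span ℂ ((W k : Set V) ∩ (VQ : Set V)))
    (hMHS : IsMHS σ F W)
    (I : ℤ → ℤ → Submodule ℂ V) (hI : IsDeligne σ F W I)
    (α : Module.End ℂ V) (hα : α ∈ lamFW I) :
    IsMHS σ (fun p => (F p).map (expEnd α)) W ∧
    IsDeligne σ (fun p => (F p).map (expEnd α)) W
      (fun p q => (I p q).map (expEnd α)) := by
  obtain ⟨⟨hInt, hF, hWI⟩, hDel⟩ := hI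
  obtain ⟨hFdec, hWinc, hWσ, hPure⟩ := hMHS
  have Wmono : Monotone W := monotone_int_of_le_succ hWinc.1
  have hαS : α ∈ sLow I := lamFW_le_sLow hα
  set g : Module.End ℂ V := expEnd α with hgdef
  -- split off the identity from the exponential
  obtain ⟨N, hNs, hsplit⟩ : ∃ N_ ∈ sLow I, g = 1 + N_ := by
    refine ⟨∑ i ∈ Finset.range (Module.finrank ℂ V),
      (((i + 1).factorial : ℂ)⁻¹) • α ^ (i + 1), ?_, ?_⟩
    · exact Submodule.sum_mem _ fun i _ => Submodule.smul_mem _ _ (sLow_pow hαS i)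
    · rw [hgdef, expEnd, Finset.sum_range_succ']
      simp [add_comm]
  have hsplitv : ∀ v, g v = v + N v := fun v => by
    rw [hsplit]; simp
  -- finiteness of W
  obtain ⟨a, hWa⟩ := hWinc.2.1
  obtain ⟨b, hWb⟩ := hWinc.2.2
  -- N is nilpotent
  have hkey : ∀ j : ℕ, ∀ v : V, (N ^ j) v ∈ W (b - j) := by
    intro j
    induction j with
    | zero => intro v; simp [hWb]
    | succ j ih =>
      intro v
      have h2 := sLow_W_apply hWI hNs (b - j) (ih v)
      have h3 : (b - (j : ℤ)) - 1 = b - ((j : ℕ) + 1 : ℕ) := by push_cast; ring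
      rw [h3] at h2
      rw [pow_succ']
      exact h2
  have hNm : N ^ ((b - a).toNat + 1) = 0 := by
    apply LinearMap.ext
    intro v
    have h1 := hkey ((b - a).toNat + 1) v
    have h2 : b - (((b - a).toNat + 1 : ℕ) : ℤ) ≤ a := by push_cast; omega
    have h3 := Wmono h2 h1
    rw [hWa] at h3
    simpa using h3
  -- the inverse of g
  obtain ⟨g', hgg', hg'g, M, hMs, hsplit'⟩ :
      ∃ g', g * g' = 1 ∧ g' * g = 1 ∧ ∃ M ∈ sLow I, g' = 1 + M := by
    set m : ℕ := (b - a).toNat + 1 with hm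
    have hxm : (-N) ^ m = 0 := by rw [neg_pow, hNm, mul_zero]
    have hge : g = -(-N - 1) := by rw [hsplit, neg_sub, sub_neg_eq_add]
    refine ⟨∑ i ∈ Finset.range m, (-N) ^ i, ?_, ?_,
      ∑ i ∈ Finset.range (b - a).toNat, (-N) ^ (i + 1), ?_, ?_⟩
    · have h1 := mul_geom_sum (-N) m
      rw [hxm, zero_sub] at h1
      rw [hge, neg_mul, h1, neg_neg]
    · have h1 := geom_sum_mul (-N) m
      rw [hxm, zero_sub] at h1
      rw [hge, mul_neg, h1, neg_neg]
    · exact Submodule.sum_mem _ fun i _ => sLow_pow (neg_mem hNs) i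
    · rw [hm, Finset.sum_range_succ']
      simp [add_comm]
  have hsplitv' : ∀ v, g' v = v + M v := fun v => by
    rw [hsplit']; simp
  have hgid : ∀ v, g (g' v) = v := fun v => DFunLike.congr_fun hgg' v
  have hg'id : ∀ v, g' (g v) = v := fun v => DFunLike.congr_fun hg'g v
  -- behaviour on W
  have hσW : ∀ k : ℤ, ∀ v ∈ W k, σ v ∈ W k := fun k v hv => by
    have : σ v ∈ (W k).map σ := Submodule.mem_map_of_mem hv
    rwa [hWσ k] at this
  have hgW : ∀ k : ℤ, ∀ v ∈ W k, g v ∈ W k := fun k v hv => by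
    rw [hsplitv v]
    exact add_mem hv (Wmono (by omega) (sLow_W_apply hWI hNs k hv))
  have hg'W : ∀ k : ℤ, ∀ v ∈ W k, g' v ∈ W k := fun k v hv => by
    rw [hsplitv' v]
    exact add_mem hv (Wmono (by omega) (sLow_W_apply hWI hMs k hv))
  have hgsub : ∀ k : ℤ, ∀ v ∈ W k, g v - v ∈ W (k - 1) := fun k v hv => by
    have : g v - v = N v := by rw [hsplitv v]; abel
    rw [this]
    exact sLow_W_apply hWI hNs k hv
  -- the conjugated maps
  have hgcW : ∀ k : ℤ, ∀ v ∈ W k, conjEnd σ g v ∈ W k := fun k v hv =>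
    hσW k _ (hgW k _ (hσW k v hv))
  have hgc'W : ∀ k : ℤ, ∀ v ∈ W k, conjEnd σ g' v ∈ W k := fun k v hv =>
    hσW k _ (hg'W k _ (hσW k v hv))
  have hgcsub : ∀ k : ℤ, ∀ v ∈ W k, conjEnd σ g v - v ∈ W (k - 1) := by
    intro k v hv
    have h1 : σ v ∈ W k := hσW k v hv
    have h2 : g (σ v) - σ v ∈ W (k - 1) := hgsub k _ h1
    have h3 := hσW (k - 1) _ h2
    rw [map_sub, hσ] at h3
    exact h3
  have hinvc : ∀ v, conjEnd σ g' (conjEnd σ g v) = v := fun v => by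
    simp only [conjEnd_apply, hσ, hg'id]
  -- grF is unchanged
  have hgrF1 : ∀ k p : ℤ, grF (fun p => (F p).map g) W k p = grF F W k p :=
    grF_map_eq F g g' hgW hg'W hgsub hg'id
  have emap : (fun m => ((F m).map g).map σ) = (fun m => ((F m).map σ).map (conjEnd σ g)) :=
    funext fun m => (map_conjEnd σ hσ g (F m)).symm
  have hgrF2 : ∀ k p : ℤ,
      grF (fun m => ((F m).map g).map σ) W k p = grF (fun m => (F m).map σ) W k p := by
    intro k p
    rw [emap]
    exact grF_map_eq (fun m => (F m).map σ) (conjEnd σ g) (conjEnd σ g')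
      hgcW hgc'W hgcsub hinvc k p
  have hgrH : ∀ k p : ℤ, grH σ (fun p => (F p).map g) W k p = grH σ F W k p := by
    intro k p
    simp only [grH]
    rw [hgrF1 k p, hgrF2 k (k - p)]
  -- map of W under g
  have hgWk : ∀ k : ℤ, (W k).map g = W k := by
    intro k
    apply le_antisymm
    · rintro w ⟨v, hv, rfl⟩
      exact hgW k v hv
    · intro v hv
      exact ⟨g' v, hg'W k v hv, hgid v⟩
  -- surjectivity of g
  have htop : ∀ P : Submodule ℂ V, P = ⊤ → P.map g = ⊤ := by
    rintro P rfl
    rw [eq_top_iff]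
    intro v _
    exact ⟨g' v, trivial, hgid v⟩
  -- lowPart facts
  have hgL : ∀ p q : ℤ, (lowPart I p q).map g = lowPart I p q := by
    intro p q
    apply le_antisymm
    · rintro w ⟨v, hv, rfl⟩
      rw [hsplitv v]
      exact add_mem hv (sLow_lowPart_map hNs p q (Submodule.mem_map_of_mem hv))
    · intro v hv
      refine ⟨g' v, ?_, hgid v⟩
      rw [hsplitv' v]
      exact add_mem hv (sLow_lowPart_map hMs p q (Submodule.mem_map_of_mem hv))
  have hXg : ∀ p q : ℤ, (I p q).map g ⊔ lowPart I p q = I p q ⊔ lowPart I p q := by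
    intro p q
    apply le_antisymm
    · refine sup_le ?_ le_sup_right
      rintro w ⟨v, hv, rfl⟩
      rw [hsplitv v]
      exact Submodule.add_mem_sup hv (sLow_apply hNs hv)
    · refine sup_le ?_ le_sup_right
      intro v hv
      exact Submodule.mem_sup.2 ⟨g v, Submodule.mem_map_of_mem hv,
        -(N v), neg_mem (sLow_apply hNs hv), by rw [hsplitv v]; abel⟩
  have hσlow : ∀ p q : ℤ, (lowPart I q p).map σ ≤ lowPart I p q := by
    intro p q
    have h0 : (lowPart I q p).map σ =
        ⨆ (rs : ℤ × ℤ) (_ : rs.1 < q ∧ rs.2 < p), (I rs.1 rs.2).map σ := by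
      rw [lowPart, Submodule.map_iSup]
      exact iSup_congr fun rs => Submodule.map_iSup _ _
    rw [h0]
    refine iSup_le fun rs => iSup_le fun hrs => ?_
    calc (I rs.1 rs.2).map σ ≤ (I rs.1 rs.2).map σ ⊔ lowPart I rs.2 rs.1 := le_sup_left
      _ = I rs.2 rs.1 ⊔ lowPart I rs.2 rs.1 := (hDel rs.2 rs.1).symm
      _ ≤ lowPart I p q := sup_le (le_lowPart hrs.2 hrs.1) (lowPart_mono hrs.2.le hrs.1.le)
  have hmapgIL : ∀ p q : ℤ, (I p q).map g ≤ I p q ⊔ lowPart I p q := by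
    intro p q
    rintro w ⟨v, hv, rfl⟩
    rw [hsplitv v]
    exact Submodule.add_mem_sup hv (sLow_apply hNs hv)
  have hRHS : ∀ p q : ℤ,
      ((I q p).map g).map σ ⊔ lowPart I p q = I p q ⊔ lowPart I p q := by
    intro p q
    apply le_antisymm
    · refine sup_le ?_ le_sup_right
      refine (Submodule.map_mono (hmapgIL q p)).trans ?_
      rw [Submodule.map_sup]
      refine sup_le ?_ ((hσlow p q).trans le_sup_right)
      calc (I q p).map σ ≤ (I q p).map σ ⊔ lowPart I p q := le_sup_left
        _ = I p q ⊔ lowPart I p q := (hDel p q).symm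
    · refine sup_le ?_ le_sup_right
      have h2 : (I q p).map σ ≤ ((I q p).map g).map σ ⊔ lowPart I p q := by
        rintro w ⟨v, hv, rfl⟩
        have hv' : g' v ∈ I q p ⊔ lowPart I q p :=
          Submodule.mem_sup.2 ⟨v, hv, M v, sLow_apply hMs hv, (hsplitv' v).symm⟩
        obtain ⟨x, hx, y, hy, hxy⟩ := Submodule.mem_sup.1 hv'
        have hgy : g y ∈ lowPart I q p := by
          rw [← hgL q p]; exact Submodule.mem_map_of_mem hy
        have hsv : σ v = σ (g x) + σ (g y) := by
          rw [← hgid v, ← hxy, map_add, map_add]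
        rw [hsv]
        exact Submodule.add_mem_sup ⟨g x, Submodule.mem_map_of_mem hx, rfl⟩
          (hσlow p q ⟨g y, hgy, rfl⟩)
      calc I p q ≤ I p q ⊔ lowPart I p q := le_sup_left
        _ = (I q p).map σ ⊔ lowPart I p q := hDel p q
        _ ≤ ((I q p).map g).map σ ⊔ lowPart I p q := sup_le h2 le_sup_right
  -- now assemble everything
  refine ⟨⟨?_, hWinc, hWσ, ?_⟩, ⟨⟨?_, ?_, ?_⟩, ?_⟩⟩
  · -- IsDecFilt
    obtain ⟨hmono, ⟨aF, haF⟩, ⟨bF, hbF⟩⟩ := hFdec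
    exact ⟨fun p => Submodule.map_mono (hmono p), ⟨aF, htop _ haF⟩,
      ⟨bF, by show (F bF).map g = ⊥; rw [hbF, Submodule.map_bot]⟩⟩
  · -- IsPureOnGr
    intro k
    have hp := hPure k
    unfold IsPureOnGr at hp ⊢
    simp only [hgrH]
    exact hp
  · -- internal
    rw [DirectSum.isInternal_submodule_iff_iSupIndep_and_iSup_eq_top] at hInt ⊢
    obtain ⟨hind, hsup⟩ := hInt
    constructor
    · set e : V ≃ₗ[ℂ] V :=
        LinearEquiv.ofLinear g g' (LinearMap.ext hgid) (LinearMap.ext hg'id) with he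
      have h := hind.map_orderIso (Submodule.orderIsoMapComap e)
      have heq : ((Submodule.orderIsoMapComap e) ∘ fun pq : ℤ × ℤ => I pq.1 pq.2) =
          fun pq : ℤ × ℤ => (I pq.1 pq.2).map g := by
        funext pq
        show Submodule.map (e : V →ₗ[ℂ] V) (I pq.1 pq.2) = _
        ext w
        constructor
        · rintro ⟨v, hv, rfl⟩; exact ⟨v, hv, rfl⟩
        · rintro ⟨v, hv, rfl⟩; exact ⟨v, hv, rfl⟩
      rwa [heq] at h
    · rw [← Submodule.map_iSup, hsup]
      exact htop _ rfl
  · -- F part of bigrading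
    intro p
    show (F p).map g = ⨆ (rs : ℤ × ℤ), ⨆ (_ : p ≤ rs.1), (I rs.1 rs.2).map g
    rw [hF p, Submodule.map_iSup]
    exact iSup_congr fun rs => Submodule.map_iSup _ _
  · -- W part of bigrading
    intro k
    rw [← hgWk k, hWI k, Submodule.map_iSup]
    exact iSup_congr fun rs => Submodule.map_iSup _ _
  · -- Deligne symmetry
    intro p q
    have hlow' : lowPart (fun p q => (I p q).map g) p q = (lowPart I p q).map g := by
      rw [lowPart, lowPart, Submodule.map_iSup]
      exact iSup_congr fun rs => (Submodule.map_iSup _ _).symm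
    rw [hlow', hgL p q, hXg p q]
    exact (hRHS p q).symm
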